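/- Let d ≥ 2 and m ≥ 2, let X and A₁, …, A_m be finite sets, and let f_j : X → A_j be functions for 1 ≤ j ≤ m. Let 𝒞 := {(x₁,…,x_d) ∈ X^d : f₁(x_i) = f₁(x_{i+1}) for all 1 ≤ i ≤ d−1}. If the map H : 𝒞 → ∏_{i=1}^{d} ∏_{j=2}^{m} A_j defined by H(x₁,…,x_d) := (f_j(x_i))_{2 ≤ j ≤ m, 1 ≤ i ≤ d} is injective, then |X|^d ≤ |A₁|^{d-1} · ∏_{j=2}^{m} |A_j|^d. -/

import Mathlib

/-!
Group the points of `X` by their value under `f₁`. A chain is exactly a `d`-tuple of points in a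
single fibre, so `|𝒞| = ∑ₐ |f₁⁻¹(a)|^d`, and the power-mean (Jensen) inequality gives
`|X|^d = (∑ₐ |f₁⁻¹(a)|)^d ≤ |A₁|^(d-1) · |𝒞|`. Injectivity of `H` bounds `|𝒞|` by the size of its
codomain, `∏_{j ≥ 2} |A_j|^d`.
-/

open Finset

/-- The chain set `𝒞` for `g = f₁` and `d = n + 1`. -/
def FiberChain {X B : Type*} (g : X → B) (n : ℕ) : Type _ :=
  {x : Fin (n + 1) → X // ∀ i : Fin n, g (x i.castSucc) = g (x i.succ)}

namespace FiberChain

variable {X B : Type*} {g : X → B} {n : ℕ}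

instance [Finite X] : Finite (FiberChain g n) := Subtype.finite

lemma apply_eq_apply_zero (x : FiberChain g n) (i : Fin (n + 1)) : g (x.1 i) = g (x.1 0) := by
  induction i using Fin.induction with
  | zero => rfl
  | succ i ih => exact (x.2 i).symm.trans ih

variable (g n) in
def fiberEquiv (b : B) :
    {x : FiberChain g n // g (x.1 0) = b} ≃ (Fin (n + 1) → {y // g y = b}) where
  toFun x i := ⟨x.1.1 i, (apply_eq_apply_zero x.1 i).trans x.2⟩
  invFun y := ⟨⟨fun i => (y i).1, fun i => (y i.castSucc).2.trans (y i.succ).2.symm⟩, (y 0).2⟩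
  left_inv _ := rfl
  right_inv _ := rfl

variable (g n) in
lemma card_eq_sum [Finite X] [Fintype B] :
    Nat.card (FiberChain g n) = ∑ b, Nat.card {y // g y = b} ^ (n + 1) := by
  rw [← Nat.card_congr (Equiv.sigmaFiberEquiv fun x : FiberChain g n => g (x.1 0)), Nat.card_sigma]
  simp [Nat.card_congr (fiberEquiv g n _), Nat.card_fun]

end FiberChain

lemma Nat.card_eq_sum_card_fiber {X B : Type*} [Finite X] [Fintype B] (g : X → B) :
    Nat.card X = ∑ b, Nat.card {y // g y = b} := by
  rw [← Nat.card_congr (Equiv.sigmaFiberEquiv g), Nat.card_sigma]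

theorem card_pow_le_card_pow_mul_card_fiberChain {X B : Type*} [Finite X] [Fintype B]
    (g : X → B) (n : ℕ) :
    Nat.card X ^ (n + 1) ≤ Nat.card B ^ n * Nat.card (FiberChain g n) := by
  rw [FiberChain.card_eq_sum, Nat.card_eq_sum_card_fiber g, Nat.card_eq_fintype_card]
  exact pow_sum_le_card_mul_sum_pow (s := univ) (fun _ _ => Nat.zero_le _) n

lemma Nat.card_fun_pi_subtype {ι : Type*} [Fintype ι] (p : ι → Prop) [DecidablePred p]
    (A : ι → Type*) [∀ i, Fintype (A i)] (k : ℕ) :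
    Nat.card (Fin k → (j : {j // p j}) → A j.1) = ∏ j ∈ univ.filter p, Nat.card (A j) ^ k := by
  rw [Nat.card_fun, Nat.card_pi, prod_pow, Nat.card_eq_fintype_card (α := Fin k),
    Fintype.card_fin]
  congr 1
  exact (prod_subtype _ (by simp) fun j => Nat.card (A j)).symm

/-- Abstract counting statement for general dimension `d = e + 1 ≥ 2` and `n` even.
Here `A j` (for `j : Fin m`) plays the role of `A_{j+1}` and `f j` of `f_{j+1}`.
`𝒞` is the set of chains `(x₁,…,x_d) ∈ X^d` with `f₁(xᵢ) = f₁(x_{i+1})` for all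
`1 ≤ i ≤ d−1`, and `H` sends a chain to the family `(f_j(x_i))_{2 ≤ j ≤ m, 1 ≤ i ≤ d}`.
If `H` is injective, then `|X|^d ≤ |A₁|^{d-1} · ∏_{j=2}^m |A_j|^d`. -/
theorem counting_general_d_even_n {e m : ℕ} (hm : 2 ≤ m)
    {X : Type*} [Fintype X] (A : Fin m → Type*) [∀ j, Fintype (A j)]
    (f : ∀ j : Fin m, X → A j)
    (hH : Function.Injective
      (fun (x : {x : Fin (e + 1) → X //
          ∀ i : Fin e, f ⟨0, by omega⟩ (x i.castSucc) = f ⟨0, by omega⟩ (x i.succ)}) =>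
        fun (i : Fin (e + 1)) (j : {j : Fin m // j.val ≠ 0}) => f j.1 (x.1 i))) :
    Nat.card X ^ (e + 1) ≤
      Nat.card (A ⟨0, by omega⟩) ^ e *
        ∏ j ∈ Finset.univ.filter (fun j : Fin m => j.val ≠ 0), Nat.card (A j) ^ (e + 1) := by
  have hchains : Nat.card (FiberChain (f ⟨0, by omega⟩) e) ≤
      ∏ j ∈ univ.filter (fun j : Fin m => j.val ≠ 0), Nat.card (A j) ^ (e + 1) :=
    (Nat.card_le_card_of_injective _ hH).trans_eq (Nat.card_fun_pi_subtype _ A _)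
  exact (card_pow_le_card_pow_mul_card_fiberChain _ e).trans (Nat.mul_le_mul_left _ hchains)
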